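/- Define U₀(T) = (P³(T) ∘ T³₀) and U₁(T) = (P³(T) ∘ T³₁) for a rooted tree T. Then for all rooted trees T₁, T₂: RSTI(U₀(T₁), U₁(T₂)) is false, RSTI(U₁(T₁), U₀(T₂)) is false, RSTI(U₀(T₁), U₀(T₂)) holds if and only if RSTI(T₁, T₂) holds, and RSTI(U₁(T₁), U₁(T₂)) holds if and only if RSTI(T₁, T₂) holds. -/

import Mathlib

/-- Finite rooted trees (lists of children; regarded as unordered via the
isomorphism notion below). -/
inductive RTree : Type where
  | node : List RTree → RTree

/-- `RSTI G H`: `G` is isomorphic to a rooted subtree of `H`, i.e. there is an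
injective map sending the root of `G` to the root of `H` and each child of a
node to a distinct child of its image, recursively. -/
inductive RSTI : RTree → RTree → Prop where
  | mk {cs ds : List RTree} (ι : Fin cs.length → Fin ds.length)
      (hinj : Function.Injective ι)
      (h : ∀ i : Fin cs.length, RSTI (cs.get i) (ds.get (ι i))) :
      RSTI (RTree.node cs) (RTree.node ds)

mutual
/-- Number of nodes of a rooted tree. -/
def RTree.size : RTree → ℕ
  | .node cs => 1 + sizeList cs
def sizeList : List RTree → ℕ
  | [] => 0
  | c :: cs => RTree.size c + sizeList cs
end

mutual
/-- Depth of a rooted tree (a single node has depth 0). -/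
def RTree.depth : RTree → ℕ
  | .node cs => depthList cs
def depthList : List RTree → ℕ
  | [] => 0
  | c :: cs => max (1 + RTree.depth c) (depthList cs)
end

/-- A rooted tree is binary if every node has at most two children. -/
inductive RTree.Binary : RTree → Prop where
  | mk {cs : List RTree} (hlen : cs.length ≤ 2) (h : ∀ c ∈ cs, RTree.Binary c) :
      RTree.Binary (RTree.node cs)

/-- `pathTo k T = P^k(T)`: a path of `k` nodes rooted at one end, with the
other end joined by an edge to the root of `T`. -/
def pathTo : ℕ → RTree → RTree
  | 0, T => T
  | k + 1, T => RTree.node [pathTo k T]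

/-- `(T_a ∘ T_b)`: the rooted tree whose root has exactly the two children
`T_a` and `T_b`. -/
def pairT (a b : RTree) : RTree := RTree.node [a, b]

/-- `T³₀`: the 3-node path rooted at an endpoint. -/
def T30 : RTree := RTree.node [RTree.node [RTree.node []]]

/-- `T³₁`: the 3-node rooted tree whose root has two leaf children. -/
def T31 : RTree := RTree.node [RTree.node [], RTree.node []]

/-- `U₀(T) = (P³(T) ∘ T³₀)`. -/
def U0 (T : RTree) : RTree := pairT (pathTo 3 T) T30

/-- `U₁(T) = (P³(T) ∘ T³₁)`. -/
def U1 (T : RTree) : RTree := pairT (pathTo 3 T) T31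


/-! An embedding of `(A ∘ B)` into `(C ∘ D)` sends the two children either straight or crossed.
Depth is monotone under embeddings and `P³(T)` is deeper than both `T³₀` and `T³₁`, so `P³(T₁)` must
go to `P³(T₂)`, which holds iff `RSTI(T₁, T₂)` after peeling off the path. The second children must
then embed, and `T³₀ ↪ T³₁` fails by depth while `T³₁ ↪ T³₀` fails because two children cannot go
injectively into one. -/

theorem RSTI.refl : ∀ T : RTree, RSTI T T
  | .node cs => .mk id Function.injective_id fun i => RSTI.refl (cs.get i)
decreasing_by
  have := List.sizeOf_lt_of_mem (List.get_mem cs i)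
  simp only [RTree.node.sizeOf_spec]
  omega

theorem RSTI.length_le {cs ds : List RTree} (h : RSTI (.node cs) (.node ds)) :
    cs.length ≤ ds.length := by
  cases h with
  | mk ι hinj _ => simpa using Fintype.card_le_of_injective ι hinj

theorem one_add_depth_le_depthList {c : RTree} {cs : List RTree} (h : c ∈ cs) :
    1 + c.depth ≤ depthList cs := by
  induction cs with
  | nil => simp at h
  | cons d cs ih =>
    rcases List.mem_cons.mp h with rfl | h
    · exact le_max_left _ _
    · exact (ih h).trans (le_max_right _ _)

theorem depthList_le {cs : List RTree} {m : ℕ} (h : ∀ c ∈ cs, 1 + c.depth ≤ m) :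
    depthList cs ≤ m := by
  induction cs with
  | nil => exact Nat.zero_le m
  | cons c cs ih =>
    exact max_le (h c List.mem_cons_self) (ih fun x hx => h x (List.mem_cons_of_mem c hx))

theorem RSTI.depth_le {G H : RTree} (h : RSTI G H) : G.depth ≤ H.depth := by
  induction h with
  | @mk cs ds ι _ _ ih =>
    refine depthList_le fun c hc => ?_
    obtain ⟨i, rfl⟩ := List.get_of_mem hc
    exact (Nat.add_le_add_left (ih i) 1).trans
      (one_add_depth_le_depthList (List.get_mem ds (ι i)))

theorem depth_node_singleton (T : RTree) : (RTree.node [T]).depth = 1 + T.depth := by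
  simp [RTree.depth, depthList]

theorem depth_pathTo (k : ℕ) (T : RTree) : (pathTo k T).depth = k + T.depth := by
  induction k with
  | zero => simp [pathTo]
  | succ k ih => rw [pathTo, depth_node_singleton, ih]; omega

theorem depth_T30 : T30.depth = 2 := rfl

theorem depth_T31 : T31.depth = 1 := rfl

theorem not_rsti_pathTo_of_depth_lt {k : ℕ} {T H : RTree} (h : H.depth < k) :
    ¬ RSTI (pathTo k T) H := fun hr => by
  have := hr.depth_le
  rw [depth_pathTo] at this
  omega

theorem rsti_node_singleton_iff {a b : RTree} :
    RSTI (.node [a]) (.node [b]) ↔ RSTI a b := by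
  constructor
  · rintro ⟨ι, _, h⟩
    simpa [Subsingleton.elim (α := Fin 1) (ι 0) 0] using h 0
  · intro h
    exact .mk id Function.injective_id fun i => by
      simpa [Subsingleton.elim (α := Fin 1) i 0] using h

theorem rsti_pathTo_iff (k : ℕ) {a b : RTree} :
    RSTI (pathTo k a) (pathTo k b) ↔ RSTI a b := by
  induction k with
  | zero => rfl
  | succ k ih => rw [pathTo, pathTo, rsti_node_singleton_iff, ih]

theorem fin_two_eq_zero_one_or_eq_one_zero {x y : Fin 2} (h : x ≠ y) :
    x = 0 ∧ y = 1 ∨ x = 1 ∧ y = 0 := by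
  revert x y; decide

theorem rsti_pairT_iff {a b c d : RTree} :
    RSTI (pairT a b) (pairT c d) ↔ RSTI a c ∧ RSTI b d ∨ RSTI a d ∧ RSTI b c := by
  constructor
  · rintro ⟨ι, hinj, h⟩
    rcases fin_two_eq_zero_one_or_eq_one_zero (x := ι 0) (y := ι 1)
        (hinj.ne (show (0 : Fin 2) ≠ 1 by decide)) with ⟨h0, h1⟩ | ⟨h0, h1⟩
    · exact .inl ⟨by simpa [h0] using h 0, by simpa [h1] using h 1⟩
    · exact .inr ⟨by simpa [h0] using h 0, by simpa [h1] using h 1⟩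
  · rintro (⟨hac, hbd⟩ | ⟨had, hbc⟩)
    · exact .mk id Function.injective_id fun i => by fin_cases i <;> assumption
    · exact .mk (Fin.rev : Fin 2 → Fin 2) Fin.rev_injective fun i => by
        fin_cases i <;> assumption

/-- For all rooted trees `T₁, T₂`: `RSTI(U₀T₁, U₁T₂)` and
`RSTI(U₁T₁, U₀T₂)` fail, while `RSTI(U₀T₁, U₀T₂)` and `RSTI(U₁T₁, U₁T₂)` each
hold iff `RSTI(T₁, T₂)` holds. -/
theorem U0_U1_selector (T₁ T₂ : RTree) :
    ¬ RSTI (U0 T₁) (U1 T₂) ∧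
    ¬ RSTI (U1 T₁) (U0 T₂) ∧
    (RSTI (U0 T₁) (U0 T₂) ↔ RSTI T₁ T₂) ∧
    (RSTI (U1 T₁) (U1 T₂) ↔ RSTI T₁ T₂) := by
  have hT30 : ¬ RSTI (pathTo 3 T₁) T30 :=
    not_rsti_pathTo_of_depth_lt (by rw [depth_T30]; omega)
  have hT31 : ¬ RSTI (pathTo 3 T₁) T31 :=
    not_rsti_pathTo_of_depth_lt (by rw [depth_T31]; omega)
  have h01 : ¬ RSTI T30 T31 := fun h => by simpa [depth_T30, depth_T31] using h.depth_le
  have h10 : ¬ RSTI T31 T30 := fun h => by simpa using h.length_le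
  simp [U0, U1, rsti_pairT_iff, rsti_pathTo_iff, RSTI.refl, hT30, hT31, h01, h10]
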